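/- (Closed chain bulk fusion with twist) For ζ ∈ ℂ^×, the single-site identity (ζ^D ⊗ diag(1,ζ)) ι(r) = ζ · ι(r) ζ^D holds in Hom(W, W⊗V), and, combined with the fusion relation L₁₃(z,r)R₂₃(z)(ι(r)⊗Id) = (1−z²)(ι(r)⊗Id)L(qz,qr), it yields (ζ^D ⊗ diag(1,ζ) ⊗ Id) L₁₃(z,r) R₂₃(z) (ι(r) ⊗ Id_V) = ζ(1−z²)(ι(r) ⊗ Id_V)(ζ^D ⊗ Id_V) L(qz,qr) as maps W ⊗ V → W ⊗ V ⊗ V. -/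

import Mathlib

noncomputable section

open Finsupp Matrix

/-- The infinite-dimensional space `W = ⊕_{j≥0} ℂ w^j`. -/
abbrev Wsp : Type := ℕ →₀ ℂ

abbrev EndW : Type := Module.End ℂ Wsp

/-- The basis vector `w^j`. -/
def wv (j : ℕ) : Wsp := Finsupp.single j 1

/-- The linear operator on `W` determined by its values on the basis. -/
def mkOp (g : ℕ → Wsp) : EndW :=
  Finsupp.lsum ℂ fun j => LinearMap.toSpanSingleton ℂ Wsp (g j)

/-- The annihilation operator `a`. -/
def opA : EndW := mkOp fun j => match j with | 0 => 0 | i + 1 => wv i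

/-- The creation operator `a†`. -/
def opAdag (q : ℂ) : EndW := mkOp fun j => (1 - q ^ (2 * (j + 1))) • wv (j + 1)

/-- The diagonal operator `f(D)`. -/
def opDiag (f : ℕ → ℂ) : EndW := mkOp fun j => f j • wv j

/-- The L-operator `L(z,r)` on `W ⊗ ℂ²`, written as a 2×2 matrix with entries in `End(W)`. -/
def Lmat (q z r : ℂ) : Matrix (Fin 2) (Fin 2) EndW :=
  !![1, -(q⁻¹ * z) • opAdag q;
     -(q * z) • opA, opDiag fun j => 1 - q ^ (2 * (j + 1)) * z ^ 2] *
  !![r • opDiag (fun j => q ^ j), 0;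
     0, opDiag fun j => (q ^ j)⁻¹]

/-- The components of the fusion intertwiner `ι(r) : W → W ⊗ V`,
`ι(r)(w^j) = (q^{-j-1} - q^{j+1}) w^{j+1} ⊗ v⁰ + q^{j+1} r w^j ⊗ v¹`. -/
def iotaC (q r : ℂ) : Fin 2 → EndW :=
  ![mkOp fun j => ((q⁻¹) ^ (j + 1) - q ^ (j + 1)) • wv (j + 1),
    opDiag fun j => q ^ (j + 1) * r]

/-- The components of the fusion intertwiner `τ(r) : W ⊗ V → W`,
`τ(r)(w^j ⊗ v⁰) = q^j w^j`, `τ(r)(w^j ⊗ v¹) = (q^{j+1} - q^{-j-1}) r⁻¹ w^{j+1}`. -/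
def tauC (q r : ℂ) : Fin 2 → EndW :=
  ![opDiag fun j => q ^ j,
    mkOp fun j => ((q ^ (j + 1) - (q⁻¹) ^ (j + 1)) * r⁻¹) • wv (j + 1)]

/-- The R-matrix `R(z)` on `ℂ² ⊗ ℂ²`, indexed by pairs. -/
def Rc (q z : ℂ) : Matrix (Fin 2 × Fin 2) (Fin 2 × Fin 2) ℂ :=
  Matrix.of fun p p' =>
    if p = p' then (if p.1 = p.2 then 1 - q ^ 2 * z ^ 2 else q * (1 - z ^ 2))
    else if p.1 = p'.2 ∧ p.2 = p'.1 then (1 - q ^ 2) * z else 0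

/-- `R₂₃(z)` acting in the second and third factors of `W ⊗ V ⊗ V`. -/
def R23m (q z : ℂ) : Matrix (Fin 2 × Fin 2) (Fin 2 × Fin 2) EndW :=
  Matrix.of fun p p' => Rc q z p p' • (1 : EndW)

/-- `L₁₃(z,r)` acting in the first and third factors of `W ⊗ V ⊗ V`. -/
def L13m (q z r : ℂ) : Matrix (Fin 2 × Fin 2) (Fin 2 × Fin 2) EndW :=
  Matrix.of fun p p' => if p.1 = p'.1 then Lmat q z r p.2 p'.2 else 0

/-- `ι(r) ⊗ Id_V : W ⊗ V → W ⊗ V ⊗ V`. -/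
def iotaExt (q r : ℂ) : Matrix (Fin 2 × Fin 2) (Fin 2) EndW :=
  Matrix.of fun p d => if p.2 = d then iotaC q r p.1 else 0

/-- `τ(r) ⊗ Id_V : W ⊗ V ⊗ V → W ⊗ V`. -/
def tauExt (q r : ℂ) : Matrix (Fin 2) (Fin 2 × Fin 2) EndW :=
  Matrix.of fun d p => if p.2 = d then tauC q r p.1 else 0

/-- The twist operator `ζ^D` on `W`. -/
def zetaD (ζ : ℂ) : EndW := opDiag fun j => ζ ^ j

/-- `ζ^D ⊗ diag(1,ζ)` on `W ⊗ V`. -/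
def twist2 (ζ : ℂ) : Matrix (Fin 2) (Fin 2) EndW :=
  !![zetaD ζ, 0; 0, ζ • zetaD ζ]

/-- `ζ^D ⊗ diag(1,ζ) ⊗ Id` on `W ⊗ V ⊗ V`. -/
def twist3 (ζ : ℂ) : Matrix (Fin 2 × Fin 2) (Fin 2 × Fin 2) EndW :=
  Matrix.of fun p p' =>
    if p = p' then (if p.1 = 0 then zetaD ζ else ζ • zetaD ζ) else 0

/-- `ζ^D ⊗ Id_V` on `W ⊗ V`. -/
def d2' (X : EndW) : Matrix (Fin 2) (Fin 2) EndW := !![X, 0; 0, X]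

lemma mkOp_wv (g : ℕ → Wsp) (j : ℕ) : mkOp g (wv j) = g j := by
  simp [mkOp, wv, LinearMap.toSpanSingleton_apply]

lemma endW_ext {f g : EndW} (h : ∀ j, f (wv j) = g (wv j)) : f = g := by
  apply Finsupp.lhom_ext
  intro a b
  have hs : (Finsupp.single a b : Wsp) = b • wv a := by
    simp [wv, Finsupp.smul_single]
  rw [hs, _root_.map_smul, _root_.map_smul, h]

lemma opA_wv0 : opA (wv 0) = 0 := by simp [opA, mkOp_wv]

lemma opA_wv (j : ℕ) : opA (wv (j + 1)) = wv j := by simp [opA, mkOp_wv]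

lemma opAdag_wv (q : ℂ) (j : ℕ) :
    opAdag q (wv j) = (1 - q ^ (2 * (j + 1))) • wv (j + 1) := by
  simp [opAdag, mkOp_wv]

lemma opDiag_wv (f : ℕ → ℂ) (j : ℕ) : opDiag f (wv j) = f j • wv j := by
  simp [opDiag, mkOp_wv]

lemma zetaD_wv (ζ : ℂ) (j : ℕ) : zetaD ζ (wv j) = ζ ^ j • wv j := by
  simp [zetaD, opDiag_wv]

def L00 (q r : ℂ) : EndW := opDiag fun j => r * q ^ j
def L01 (q z : ℂ) : EndW :=
  mkOp fun j => (-(q⁻¹ * z) * ((q ^ j)⁻¹ * (1 - q ^ (2 * (j + 1))))) • wv (j + 1)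
def L10 (q z r : ℂ) : EndW :=
  mkOp fun j => match j with
    | 0 => 0
    | i + 1 => (-(q * z) * (r * q ^ (i + 1))) • wv i
def L11 (q z : ℂ) : EndW := opDiag fun j => (1 - q ^ (2 * (j + 1)) * z ^ 2) * (q ^ j)⁻¹

lemma L00_wv (q r : ℂ) (j : ℕ) : L00 q r (wv j) = (r * q ^ j) • wv j := by
  simp [L00, opDiag_wv]
lemma L01_wv (q z : ℂ) (j : ℕ) :
    L01 q z (wv j) = (-(q⁻¹ * z) * ((q ^ j)⁻¹ * (1 - q ^ (2 * (j + 1))))) • wv (j + 1) := by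
  simp [L01, mkOp_wv]
lemma L10_wv0 (q z r : ℂ) : L10 q z r (wv 0) = 0 := by simp [L10, mkOp_wv]
lemma L10_wv (q z r : ℂ) (j : ℕ) :
    L10 q z r (wv (j + 1)) = (-(q * z) * (r * q ^ (j + 1))) • wv j := by
  simp [L10, mkOp_wv]
lemma L11_wv (q z : ℂ) (j : ℕ) :
    L11 q z (wv j) = ((1 - q ^ (2 * (j + 1)) * z ^ 2) * (q ^ j)⁻¹) • wv j := by
  simp [L11, opDiag_wv]

set_option maxHeartbeats 1000000 in
lemma Lmat_eq (q z r : ℂ) :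
    Lmat q z r = !![L00 q r, L01 q z; L10 q z r, L11 q z] := by
  funext i k
  fin_cases i <;> fin_cases k <;>
  · apply endW_ext
    intro j
    rcases j with _ | j <;>
      simp [Lmat, Matrix.mul_apply, Fin.sum_univ_two, L00_wv, L01_wv, L10_wv0,
        L10_wv, L11_wv, opDiag_wv, opA_wv, opA_wv0, opAdag_wv,
        Module.End.mul_apply, LinearMap.smul_apply, LinearMap.add_apply,
        _root_.map_smul, map_add, smul_smul] <;>
      try (match_scalars <;> ring)

set_option maxHeartbeats 0 in
/-- closed-chain bulk fusion with twist: the single-site identity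
`(ζ^D ⊗ diag(1,ζ)) ι(r) = ζ ι(r) ζ^D`, and, combined with the bulk fusion relation, the
identity `(ζ^D ⊗ diag(1,ζ) ⊗ Id) L₁₃(z,r) R₂₃(z) (ι(r) ⊗ Id_V)
= ζ(1-z²)(ι(r) ⊗ Id_V)(ζ^D ⊗ Id_V) L(qz,qr)`. -/
theorem closed_bulk_fusion_twist (q z r ζ : ℂ) (hq0 : q ≠ 0) (hq1 : q ≠ 1)
    (hqm1 : q ≠ -1) (hz : z ≠ 0) (hr : r ≠ 0) (hζ : ζ ≠ 0) :
    (twist2 ζ).mulVec (iotaC q r) = (fun i => ζ • (iotaC q r i * zetaD ζ)) ∧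
    twist3 ζ * L13m q z r * R23m q z * iotaExt q r =
      (ζ * (1 - z ^ 2)) • (iotaExt q r * d2' (zetaD ζ) * Lmat q (q * z) (q * r)) := by
  constructor
  · funext i
    fin_cases i <;>
    · apply endW_ext
      intro j
      simp [Matrix.mulVec, dotProduct, Fin.sum_univ_two, twist2, iotaC,
        zetaD_wv, opDiag_wv, mkOp_wv, Module.End.mul_apply, LinearMap.smul_apply,
        LinearMap.add_apply, _root_.map_smul, smul_smul]
      match_scalars <;> ring
  · funext p d
    obtain ⟨p1, p2⟩ := p
    fin_cases p1 <;> fin_cases p2 <;> fin_cases d <;>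
    · apply endW_ext
      intro j
      rcases j with _ | j <;>
      · simp +decide [Matrix.mul_apply, Fintype.sum_prod_type, Fin.sum_univ_two,
          Lmat_eq, twist3, L13m, R23m, Rc, iotaExt, iotaC, d2', zetaD_wv, opDiag_wv,
          L00_wv, L01_wv, L10_wv0, L10_wv, L11_wv, mkOp_wv,
          Module.End.mul_apply, LinearMap.smul_apply, LinearMap.add_apply,
          Matrix.smul_apply, _root_.map_smul, map_add, smul_smul]
        try (match_scalars <;> (field_simp <;> ring))
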